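/- Let M be a commutative idempotent monoid acting additively on an abelian group G, F : M → G a function satisfying the chain rule, and X_1, …, X_n ∈ M. Then for every nonempty I ⊆ [n] the following two identities hold: (1) TC_F(;_{i∈I} X_i) = Σ_{∅ ≠ L ⊆ I} (|L| − 1) · X_{I∖L}.F(;_{l∈L} X_l); (2) (|I| − 1) · F(;_{i∈I} X_i) = Σ_{∅ ≠ L ⊆ I} (−1)^{|I|−|L|} · X_{I∖L}.TC_F(;_{l∈L} X_l) (integer multiples taken in G). -/

import Mathlib

/-!
Write `Z g J = ∑_{L ⊆ J} X_{J∖L}.g(L)` for the zeta transform on subsets twisted by the action.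
Expanding `F(;_{l∈L} X_l)` by inclusion–exclusion in the `F(X_T)`, `T ⊆ L`, shows that it is
symmetric in its arguments, so `F(;_{l ∈ L ∪ {a}} X_l) = F(;_{l∈L} X_l) - X_a.F(;_{l∈L} X_l)` for
every `a ∉ L`, not only for `a > max L`. Induction on `J` along this recursion gives
`Z F(;·) J = F(X_J)` (the chain rule) and `Z (|·| F(;·)) J = ∑_{j∈J} F(X_j)`; their difference is
(1). Since the action is commutative and `X_{I∖L} X_{L∖K} = X_{I∖K}` for `K ⊆ L ⊆ I`, the sum
`∑_{L ⊆ I} (-1)^{|I|-|L|} X_{I∖L}.f(L)` inverts `Z`, and (2) is the inversion of (1).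
-/

namespace AMRF
/-- An additive monoid action of a commutative monoid `M` on an abelian group `G`. -/
structure MAction (M G : Type*) [CommMonoid M] [AddCommGroup G] where
  act : M → G → G
  act_one : ∀ g, act 1 g = g
  act_mul : ∀ X Y g, act X (act Y g) = act (X * Y) g
  act_add : ∀ X g h, act X (g + h) = act X g + act X h

variable {M G : Type*} [CommMonoid M] [AddCommGroup G]

/-- `F : M → G` satisfies the chain rule `F(XY) = F(X) + X.F(Y)`. -/
def ChainRule (A : MAction M G) (F : M → G) : Prop :=
  ∀ X Y : M, F (X * Y) = F X + A.act X (F Y)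

/-- Higher-order terms on a *reversed* argument list: the head of the list is the *last*
argument `Y_q` in `F_q(Y₁; …; Y_q)`. -/
def Fseq (A : MAction M G) (F : M → G) : List M → G
  | [] => 0
  | [Y] => F Y
  | Y :: Z :: l => Fseq A F (Z :: l) - A.act Y (Fseq A F (Z :: l))

/-- `Fof A F [Y₁, …, Y_q] = F_q(Y₁; …; Y_q)`, defined inductively by
`F_q(Y₁; …; Y_q) = F_{q−1}(Y₁; …; Y_{q−1}) − Y_q.F_{q−1}(Y₁; …; Y_{q−1})`. -/
def Fof (A : MAction M G) (F : M → G) (l : List M) : G :=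
  Fseq A F l.reverse

/-- The interaction term `F(;_{i∈I} X_i)`, with arguments in increasing index order. -/
def Fint (A : MAction M G) (F : M → G) {ι : Type*} [LinearOrder ι] (X : ι → M)
    (I : Finset ι) : G :=
  Fof A F ((I.sort (· ≤ ·)).map X)

/-- The `F`-independence relation: `X ⊥_F Y | Z` iff `Z.F(X; Y) = 0`, where
`F(X; Y) = F(X) − Y.F(X)` is the second-order term. -/
def Findep (A : MAction M G) (F : M → G) (X Y Z : M) : Prop :=
  A.act Z (F X - A.act Y (F X)) = 0

/-- The `F`-total correlation `TC_F(;_{l∈L} X_l) = Σ_{l∈L} F(X_l) − F(X_L)`. -/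
def TC (F : M → G) {ι : Type*} (X : ι → M) (L : Finset ι) : G :=
  (∑ l ∈ L, F (X l)) - F (∏ l ∈ L, X l)

open Finset

namespace MAction

variable (A : MAction M G)

def toAddMonoidHom (X : M) : G →+ G :=
  AddMonoidHom.mk' (A.act X) (A.act_add X)

lemma act_zero (X : M) : A.act X 0 = 0 :=
  (A.toAddMonoidHom X).map_zero

lemma act_sub (X : M) (g h : G) : A.act X (g - h) = A.act X g - A.act X h :=
  (A.toAddMonoidHom X).map_sub g h

lemma act_zsmul (X : M) (k : ℤ) (g : G) : A.act X (k • g) = k • A.act X g :=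
  map_zsmul (A.toAddMonoidHom X) k g

lemma act_sum {κ : Type*} (X : M) (s : Finset κ) (g : κ → G) :
    A.act X (∑ i ∈ s, g i) = ∑ i ∈ s, A.act X (g i) :=
  map_sum (A.toAddMonoidHom X) g s

lemma act_comm (X Y : M) (g : G) : A.act X (A.act Y g) = A.act Y (A.act X g) := by
  rw [A.act_mul, A.act_mul, mul_comm]

end MAction

lemma ChainRule.map_one {A : MAction M G} {F : M → G} (hF : ChainRule A F) : F 1 = 0 := by
  simpa [A.act_one] using hF 1 1

def inclExcl {ι : Type*} (F : M → G) (X : ι → M) (s : Finset ι) : G :=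
  ∑ T ∈ s.powerset, (-1 : ℤ) ^ (#T + 1) • F (∏ i ∈ T, X i)

section InclExcl

variable {ι : Type*} [DecidableEq ι] {A : MAction M G} {F : M → G} (X : ι → M)

lemma inclExcl_insert (hF : ChainRule A F) {a : ι} {s : Finset ι} (ha : a ∉ s)
    (hs : s.Nonempty) :
    inclExcl F X (insert a s) = inclExcl F X s - A.act (X a) (inclExcl F X s) := by
  have hsign : ∑ T ∈ s.powerset, (-1 : ℤ) ^ (#T + 1) = 0 := by
    simp [pow_succ, sum_powerset_neg_one_pow_card_of_nonempty hs]
  have hins : ∀ T ∈ s.powerset,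
      (-1 : ℤ) ^ (#(insert a T) + 1) • F (∏ i ∈ insert a T, X i) =
        -((-1 : ℤ) ^ (#T + 1) • F (X a)) -
          A.act (X a) ((-1 : ℤ) ^ (#T + 1) • F (∏ i ∈ T, X i)) := by
    intro T hT
    have haT : a ∉ T := fun h => ha (mem_powerset.1 hT h)
    rw [card_insert_of_notMem haT, prod_insert haT, hF, A.act_zsmul, pow_succ _ (#T + 1),
      mul_neg_one, neg_smul, smul_add]
    abel
  rw [inclExcl, inclExcl, sum_powerset_insert ha, sum_congr rfl hins, sum_sub_distrib,
    sum_neg_distrib, ← sum_smul, hsign, zero_smul, neg_zero, A.act_sum]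
  abel

end InclExcl

section Fint

variable {ι : Type*} [LinearOrder ι] (A : MAction M G) (F : M → G) (X : ι → M)

lemma Fint_empty : Fint A F X ∅ = 0 := by
  simp [Fint, Fof, Fseq]

lemma Fint_singleton (a : ι) : Fint A F X {a} = F (X a) := by
  simp [Fint, Fof, Fseq]

lemma Fint_eq_Fseq_sort_ge (s : Finset ι) :
    Fint A F X s = Fseq A F ((s.sort (· ≥ ·)).map X) := by
  rw [Fint, Fof, (sortedLT_sort s).eq_reverse_of_mem_iff_of_sortedGT (by simp) (sortedGT_sort s),
    List.map_reverse, List.reverse_reverse]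

variable [DecidableEq ι]

lemma Fint_insert_of_forall_lt {a : ι} {s : Finset ι} (has : ∀ b ∈ s, b < a) (hs : s.Nonempty) :
    Fint A F X (insert a s) = Fint A F X s - A.act (X a) (Fint A F X s) := by
  have ha : a ∉ s := fun h => lt_irrefl a (has a h)
  rw [Fint_eq_Fseq_sort_ge, Fint_eq_Fseq_sort_ge, sort_insert _ (fun b hb => (has b hb).le) ha]
  obtain ⟨b, l, hl⟩ : ∃ b l, (s.sort (· ≥ ·)).map X = b :: l :=
    List.exists_cons_of_ne_nil (by simpa [← List.length_eq_zero_iff] using hs.ne_empty)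
  rw [List.map_cons, hl]
  rfl

variable {A F}

lemma Fint_eq_inclExcl (hF : ChainRule A F) (s : Finset ι) : Fint A F X s = inclExcl F X s := by
  induction s using Finset.induction_on_max with
  | empty => simp [Fint_empty, inclExcl, hF.map_one]
  | insert a s has ih =>
    rcases s.eq_empty_or_nonempty with rfl | hs
    · rw [insert_empty, Fint_singleton, inclExcl, ← insert_empty,
        sum_powerset_insert (notMem_empty a)]
      simp [hF.map_one]
    · rw [Fint_insert_of_forall_lt A F X has hs, ih,
        inclExcl_insert X hF (fun h => lt_irrefl a (has a h)) hs]

lemma Fint_insert (hF : ChainRule A F) {a : ι} {s : Finset ι} (ha : a ∉ s) (hs : s.Nonempty) :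
    Fint A F X (insert a s) = Fint A F X s - A.act (X a) (Fint A F X s) := by
  simp only [Fint_eq_inclExcl X hF]
  exact inclExcl_insert X hF ha hs

end Fint

section TwistedZeta

variable {ι : Type*} [DecidableEq ι] (A : MAction M G) (X : ι → M)

def twistedZeta (g : Finset ι → G) (J : Finset ι) : G :=
  ∑ L ∈ J.powerset, A.act (∏ i ∈ J \ L, X i) (g L)

def twistedMoebius (f : Finset ι → G) (I : Finset ι) : G :=
  ∑ L ∈ I.powerset, (-1 : ℤ) ^ (#I - #L) • A.act (∏ i ∈ I \ L, X i) (f L)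

lemma twistedZeta_empty (g : Finset ι → G) : twistedZeta A X g ∅ = g ∅ := by
  simp [twistedZeta, A.act_one]

lemma twistedZeta_congr {g g' : Finset ι → G} {J : Finset ι} (h : ∀ L ⊆ J, g L = g' L) :
    twistedZeta A X g J = twistedZeta A X g' J :=
  sum_congr rfl fun L hL => by rw [h L (mem_powerset.1 hL)]

lemma twistedZeta_add (g g' : Finset ι → G) (J : Finset ι) :
    twistedZeta A X (fun L => g L + g' L) J = twistedZeta A X g J + twistedZeta A X g' J := by
  simp only [twistedZeta, A.act_add, sum_add_distrib]

lemma twistedZeta_sub (g g' : Finset ι → G) (J : Finset ι) :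
    twistedZeta A X (fun L => g L - g' L) J = twistedZeta A X g J - twistedZeta A X g' J := by
  simp only [twistedZeta, A.act_sub, sum_sub_distrib]

lemma twistedZeta_sub_act (Y : M) (g : Finset ι → G) (J : Finset ι) :
    twistedZeta A X (fun L => g L - A.act Y (g L)) J =
      twistedZeta A X g J - A.act Y (twistedZeta A X g J) := by
  simp only [twistedZeta, A.act_sub, A.act_comm _ Y, sum_sub_distrib, A.act_sum]

lemma twistedZeta_insert {b : ι} {J : Finset ι} (hb : b ∉ J) (g : Finset ι → G) :
    twistedZeta A X g (insert b J) =
      A.act (X b) (twistedZeta A X g J) + twistedZeta A X (fun L => g (insert b L)) J := by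
  rw [twistedZeta, sum_powerset_insert hb, twistedZeta, twistedZeta, A.act_sum]
  congr 1
  · refine sum_congr rfl fun L hL => ?_
    have hbL : b ∉ J \ L := fun h => hb (mem_sdiff.1 h).1
    rw [insert_sdiff_of_notMem _ fun h => hb (mem_powerset.1 hL h), prod_insert hbL, A.act_mul]
  · refine sum_congr rfl fun L _ => ?_
    rw [insert_sdiff_insert, sdiff_insert_of_notMem hb]

lemma twistedMoebius_insert {b : ι} {I : Finset ι} (hb : b ∉ I) (f : Finset ι → G) :
    twistedMoebius A X f (insert b I) =
      twistedMoebius A X (fun L => f (insert b L) - A.act (X b) (f L)) I := by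
  rw [twistedMoebius, sum_powerset_insert hb, ← sum_add_distrib, twistedMoebius]
  refine sum_congr rfl fun L hL => ?_
  have hLI : L ⊆ I := mem_powerset.1 hL
  have hbL : b ∉ L := fun h => hb (hLI h)
  have hbIL : b ∉ I \ L := fun h => hb (mem_sdiff.1 h).1
  have hsign : #(insert b I) - #L = (#I - #L) + 1 := by
    rw [card_insert_of_notMem hb, Nat.sub_add_comm (card_le_card hLI)]
  rw [hsign, card_insert_of_notMem hb, card_insert_of_notMem hbL, Nat.add_sub_add_right,
    insert_sdiff_of_notMem _ hbL, prod_insert hbIL, insert_sdiff_insert,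
    sdiff_insert_of_notMem hb, pow_succ, mul_neg_one, neg_smul, A.act_sub, smul_sub, ← A.act_mul,
    A.act_comm]
  abel

lemma twistedMoebius_twistedZeta (g : Finset ι → G) (I : Finset ι) :
    twistedMoebius A X (twistedZeta A X g) I = g I := by
  induction I using Finset.induction_on generalizing g with
  | empty => simp [twistedMoebius, twistedZeta_empty, A.act_one]
  | insert b I hb ih =>
    rw [twistedMoebius_insert A X hb, ← ih fun L => g (insert b L)]
    refine sum_congr rfl fun L hL => ?_
    beta_reduce
    rw [twistedZeta_insert A X fun h => hb (mem_powerset.1 hL h), add_sub_cancel_left]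

end TwistedZeta

section Interaction

variable {ι : Type*} [LinearOrder ι] [DecidableEq ι] {A : MAction M G} {F : M → G} (X : ι → M)

-- The expansion of `∏_{j ∈ J} (X_j + (1 - X_j)) = 1`, applied to `F(X_a)`.
lemma twistedZeta_Fint_insert (hF : ChainRule A F) {a : ι} {J : Finset ι} (ha : a ∉ J) :
    twistedZeta A X (fun L => Fint A F X (insert a L)) J = F (X a) := by
  induction J using Finset.induction_on with
  | empty => simp [twistedZeta_empty, Fint_singleton]
  | insert b J hb ih =>
    have haJ : a ∉ J := fun h => ha (mem_insert_of_mem h)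
    have hab : a ≠ b := fun h => ha (h ▸ mem_insert_self a J)
    have hrec : ∀ L ⊆ J, Fint A F X (insert a (insert b L)) =
        Fint A F X (insert a L) - A.act (X b) (Fint A F X (insert a L)) := by
      intro L hL
      have hbaL : b ∉ insert a L := by
        simp only [mem_insert, not_or]
        exact ⟨hab.symm, fun h => hb (hL h)⟩
      rw [insert_comm, Fint_insert X hF hbaL (insert_nonempty a L)]
    rw [twistedZeta_insert A X hb, twistedZeta_congr A X hrec, twistedZeta_sub_act, ih haJ]
    abel

lemma twistedZeta_Fint (hF : ChainRule A F) (J : Finset ι) :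
    twistedZeta A X (Fint A F X) J = F (∏ i ∈ J, X i) := by
  induction J using Finset.induction_on with
  | empty => simp [twistedZeta_empty, Fint_empty, hF.map_one]
  | insert b J hb ih =>
    rw [twistedZeta_insert A X hb, ih, twistedZeta_Fint_insert X hF hb, prod_insert hb, hF,
      add_comm]

lemma twistedZeta_card_smul_Fint (hF : ChainRule A F) (J : Finset ι) :
    twistedZeta A X (fun L => (#L : ℤ) • Fint A F X L) J = ∑ j ∈ J, F (X j) := by
  induction J using Finset.induction_on with
  | empty => simp [twistedZeta_empty]
  | insert b J hb ih =>
    have hsplit : ∀ L ⊆ J, (#(insert b L) : ℤ) • Fint A F X (insert b L) =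
        ((#L : ℤ) • Fint A F X L - A.act (X b) ((#L : ℤ) • Fint A F X L)) +
          Fint A F X (insert b L) := by
      intro L hL
      have hbL : b ∉ L := fun h => hb (hL h)
      rcases L.eq_empty_or_nonempty with rfl | hL'
      · simp [A.act_zero]
      · rw [card_insert_of_notMem hbL, Nat.cast_succ, add_smul, one_smul,
          Fint_insert X hF hbL hL', smul_sub, A.act_zsmul]
    rw [twistedZeta_insert A X hb, twistedZeta_congr A X hsplit, twistedZeta_add,
      twistedZeta_sub_act, ih, twistedZeta_Fint_insert X hF hb, sum_insert hb]
    abel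

lemma twistedZeta_eq_TC (hF : ChainRule A F) (J : Finset ι) :
    twistedZeta A X (fun L => ((#L : ℤ) - 1) • Fint A F X L) J = TC F X J := by
  simp only [sub_smul, one_smul]
  rw [twistedZeta_sub, twistedZeta_card_smul_Fint X hF, twistedZeta_Fint X hF, TC]

end Interaction

lemma sum_filter_nonempty_powerset {ι : Type*} {f : Finset ι → G} (s : Finset ι) (h : f ∅ = 0) :
    ∑ L ∈ s.powerset.filter (fun L => L.Nonempty), f L = ∑ L ∈ s.powerset, f L :=
  sum_filter_of_ne fun _ _ hL => nonempty_iff_ne_empty.2 fun h' => hL (h' ▸ h)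

theorem TC_interaction_formulas_general
    {M G : Type*} [CommMonoid M] [AddCommGroup G]
    (A : MAction M G) (F : M → G) (hF : ChainRule A F)
    (n : ℕ) (X : Fin n → M) (I : Finset (Fin n)) :
    (TC F X I =
      ∑ L ∈ I.powerset.filter (fun L => L.Nonempty),
        ((L.card : ℤ) - 1) • A.act (∏ a ∈ I \ L, X a) (Fint A F X L)) ∧
    (((I.card : ℤ) - 1) • Fint A F X I =
      ∑ L ∈ I.powerset.filter (fun L => L.Nonempty),
        (-1 : ℤ) ^ (I.card - L.card) • A.act (∏ a ∈ I \ L, X a) (TC F X L)) := by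
  have hTC : twistedZeta A X (fun L => ((#L : ℤ) - 1) • Fint A F X L) = TC F X :=
    funext (twistedZeta_eq_TC X hF)
  constructor
  · rw [← hTC, twistedZeta, sum_filter_nonempty_powerset _ (by simp [Fint_empty, A.act_zero])]
    exact sum_congr rfl fun L _ => A.act_zsmul _ _ _
  · rw [← twistedMoebius_twistedZeta A X (fun L => ((#L : ℤ) - 1) • Fint A F X L), hTC,
      twistedMoebius, sum_filter_nonempty_powerset _ (by simp [TC, hF.map_one, A.act_zero])]

/-- For every nonempty `I ⊆ [n]`:
(1) `TC_F(;_{i∈I} Xᵢ) = Σ_{∅≠L⊆I} (|L|−1) · X_{I∖L}.F(;_{l∈L} X_l)`;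
(2) `(|I|−1) · F(;_{i∈I} Xᵢ) = Σ_{∅≠L⊆I} (−1)^{|I|−|L|} · X_{I∖L}.TC_F(;_{l∈L} X_l)`. -/
theorem TC_interaction_formulas
    {M G : Type*} [CommMonoid M] [AddCommGroup G]
    (hidem : ∀ x : M, x * x = x)
    (A : MAction M G) (F : M → G) (hF : ChainRule A F)
    (n : ℕ) (X : Fin n → M) (I : Finset (Fin n)) (hI : I.Nonempty) :
    (TC F X I =
      ∑ L ∈ I.powerset.filter (fun L => L.Nonempty),
        ((L.card : ℤ) - 1) • A.act (∏ a ∈ I \ L, X a) (Fint A F X L)) ∧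
    (((I.card : ℤ) - 1) • Fint A F X I =
      ∑ L ∈ I.powerset.filter (fun L => L.Nonempty),
        (-1 : ℤ) ^ (I.card - L.card) • A.act (∏ a ∈ I \ L, X a) (TC F X L)) :=
  TC_interaction_formulas_general A F hF n X I

end AMRF
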